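/- arXiv:2605.06166 — 3 statements merged into one kernel-verified Lean document; each statement's English description precedes it below -/
import Mathlib

section
/- Let c ∈ ℝ^D be a diagonal curvature vector and let the data-side diagonal-curvature localized game on {1,…,N} be U_𝒟^(diag)(S) = η ∑_{n ∈ S} ⟨v, g_n⟩ − (η²/2) ∑_{d=1}^D c_d (∑_{m ∈ S} g_{m,d})². Then for every n ∈ {1,…,N}, the Shapley value of player n equals the row sum of the diagonal interaction matrix: φ_n(U_𝒟^(diag)) = ∑_{d=1}^D M^(diag)_{n,d} = η ⟨v, g_n⟩ − (η²/2) ∑_{d=1}^D c_d G_d g_{n,d}. -/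
/-!
The game is quadratic: `U(S) = ∑_{j ∈ S} a_j + ∑_{j, k ∈ S} Q_{jk}` with `a_j = η ⟨v, g_j⟩` and
the symmetric `Q_{jk} = -(η²/2) ∑_d c_d g_{j,d} g_{k,d}`. The marginal contribution of `i` to a
coalition `S ∌ i` is `a_i + Q_{ii} + 2 ∑_{j ∈ S} Q_{ij}`. The Shapley weights of the coalitions
avoiding `i` sum to `1`, and those of the coalitions that moreover contain a fixed `j ≠ i` sum
to `1/2`, so `φ_i = a_i + ∑_k Q_{ik}`, which is the row sum of `M^(diag)`.
-/

/-- The Shapley value of player `i` in the cooperative game with utility `u` on the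
finite player set `P` with `|P| = m`:
`φ_i(u) = ∑_{S ⊆ P \ {i}} (|S|! (m - |S| - 1)! / m!) (u(S ∪ {i}) - u(S))`. -/
noncomputable def shapley {P : Type*} [Fintype P] [DecidableEq P]
    (u : Finset P → ℝ) (i : P) : ℝ :=
  ∑ S ∈ (Finset.univ.erase i).powerset,
    ((Nat.factorial S.card * Nat.factorial (Fintype.card P - S.card - 1) : ℝ)
        / (Nat.factorial (Fintype.card P) : ℝ))
      * (u (insert i S) - u S)

open Finset Nat

noncomputable def shapleyWeight (m k : ℕ) : ℝ := (k ! * (m - k - 1)! : ℝ) / m !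

lemma choose_mul_shapleyWeight {e k : ℕ} (hk : k ≤ e) :
    (e.choose k : ℝ) * shapleyWeight (e + 1) k = 1 / (e + 1) := by
  rw [shapleyWeight, Nat.cast_choose ℝ hk, show e + 1 - k - 1 = e - k by omega, Nat.factorial_succ]
  push_cast
  field_simp

lemma choose_mul_shapleyWeight_succ {f k : ℕ} (hk : k ≤ f) :
    (f.choose k : ℝ) * shapleyWeight (f + 2) (k + 1) = (k + 1) / ((f + 1) * (f + 2)) := by
  rw [shapleyWeight, Nat.cast_choose ℝ hk, show f + 2 - (k + 1) - 1 = f - k by omega,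
    Nat.factorial_succ, Nat.factorial_succ (f + 1), Nat.factorial_succ f]
  push_cast
  field_simp
  ring

lemma sum_range_cast_add_one (n : ℕ) : ∑ k ∈ range n, ((k : ℝ) + 1) = n * (n + 1) / 2 := by
  have h := Finset.sum_range_id_mul_two (n + 1)
  rw [Finset.sum_range_succ'] at h
  simp only [add_zero, add_tsub_cancel_right] at h
  have : ((∑ k ∈ range n, (k + 1) : ℕ) : ℝ) * 2 = (n + 1) * n := by exact_mod_cast h
  push_cast at this
  linarith

lemma sum_powerset_shapleyWeight {α : Type*} (E : Finset α) :
    ∑ S ∈ E.powerset, shapleyWeight (#E + 1) #S = 1 := by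
  rw [sum_powerset_apply_card]
  simp only [nsmul_eq_mul]
  rw [sum_congr rfl fun k hk => choose_mul_shapleyWeight (Nat.lt_succ_iff.mp (mem_range.mp hk))]
  simp only [succ_eq_add_one, one_div, sum_const, card_range, nsmul_eq_mul, cast_add, cast_one]
  field_simp

lemma sum_powerset_shapleyWeight_succ {α : Type*} (F : Finset α) :
    ∑ T ∈ F.powerset, shapleyWeight (#F + 2) (#T + 1) = 1 / 2 := by
  rw [sum_powerset_apply_card (fun k => shapleyWeight (#F + 2) (k + 1))]
  simp only [nsmul_eq_mul]
  rw [sum_congr rfl fun k hk =>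
      choose_mul_shapleyWeight_succ (Nat.lt_succ_iff.mp (mem_range.mp hk)),
    ← sum_div, sum_range_cast_add_one]
  push_cast
  field_simp
  ring

lemma sum_powerset_filter_mem {α β : Type*} [DecidableEq α] [AddCommMonoid β] {E : Finset α}
    {j : α} (hj : j ∈ E) (f : Finset α → β) :
    ∑ S ∈ E.powerset with j ∈ S, f S = ∑ T ∈ (E.erase j).powerset, f (insert j T) := by
  refine (sum_nbij' (insert j) (erase · j) ?_ ?_ ?_ ?_ fun _ _ => rfl).symm
  · intro T hT
    have hTE := mem_powerset.mp hT
    exact mem_filter.mpr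
      ⟨mem_powerset.mpr (insert_subset hj (hTE.trans (erase_subset j E))), mem_insert_self j T⟩
  · intro S hS
    exact mem_powerset.mpr (erase_subset_erase j (mem_powerset.mp (mem_filter.mp hS).1))
  · intro T hT
    exact erase_insert fun h => notMem_erase j E (mem_powerset.mp hT h)
  · intro S hS
    exact insert_erase (mem_filter.mp hS).2

lemma sum_powerset_shapleyWeight_mem {α : Type*} [DecidableEq α] {E : Finset α} {j : α}
    (hj : j ∈ E) :
    ∑ S ∈ E.powerset with j ∈ S, shapleyWeight (#E + 1) #S = 1 / 2 := by
  rw [sum_powerset_filter_mem hj, ← sum_powerset_shapleyWeight_succ (E.erase j),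
    ← card_erase_add_one hj]
  refine sum_congr rfl fun T hT => ?_
  rw [card_insert_of_notMem fun h => notMem_erase j E (mem_powerset.mp hT h)]

section

variable {P : Type*} [Fintype P] [DecidableEq P]

theorem shapley_eq_of_marginal (u : Finset P → ℝ) (i : P) (α : ℝ) (β : P → ℝ)
    (h : ∀ S, i ∉ S → u (insert i S) - u S = α + ∑ j ∈ S, β j) :
    shapley u i = α + (∑ j ∈ univ.erase i, β j) / 2 := by
  set E := univ.erase i
  have hcard : Fintype.card P = #E + 1 := (card_erase_add_one (mem_univ i)).symm
  calc shapley u i = ∑ S ∈ E.powerset, shapleyWeight (#E + 1) #S * (α + ∑ j ∈ S, β j) := by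
        rw [shapley, hcard]
        refine sum_congr rfl fun S hS => ?_
        rw [h S fun hi => notMem_erase i _ (mem_powerset.mp hS hi)]
        rfl
    _ = α * ∑ S ∈ E.powerset, shapleyWeight (#E + 1) #S
          + ∑ j ∈ E, β j * ∑ S ∈ E.powerset with j ∈ S, shapleyWeight (#E + 1) #S := by
        simp only [mul_add, sum_add_distrib, mul_sum]
        congr 1
        · exact sum_congr rfl fun S _ => mul_comm _ _
        · rw [sum_comm' (t' := E) (s' := fun j => {S ∈ E.powerset | j ∈ S})]
          · exact sum_congr rfl fun j _ => sum_congr rfl fun S _ => mul_comm _ _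
          · intro S j
            simp only [mem_powerset, mem_filter]
            exact ⟨fun ⟨hS, hj⟩ => ⟨⟨hS, hj⟩, hS hj⟩, fun ⟨⟨hS, hj⟩, _⟩ => ⟨hS, hj⟩⟩
    _ = α + (∑ j ∈ E, β j) / 2 := by
        rw [sum_powerset_shapleyWeight, sum_div, mul_one]
        exact congrArg _ (sum_congr rfl fun j hj => by rw [sum_powerset_shapleyWeight_mem hj]; ring)

theorem shapley_quadratic_game (a : P → ℝ) (Q : P → P → ℝ) (hQ : ∀ j k, Q j k = Q k j) (i : P) :
    shapley (fun S => ∑ j ∈ S, a j + ∑ j ∈ S, ∑ k ∈ S, Q j k) i = a i + ∑ k, Q i k := by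
  rw [shapley_eq_of_marginal _ i (a i + Q i i) (fun j => 2 * Q i j)]
  · rw [← mul_sum, ← add_sum_erase _ _ (mem_univ i)]
    ring
  · intro S hiS
    simp only [sum_insert hiS, sum_add_distrib, hQ _ i]
    rw [← mul_sum]
    ring

end

lemma sum_mul_sq_sum {R ι κ : Type*} [CommSemiring R] [Fintype κ] (c : κ → R) (x : ι → κ → R)
    (S : Finset ι) :
    ∑ d, c d * (∑ m ∈ S, x m d) ^ 2 = ∑ j ∈ S, ∑ k ∈ S, ∑ d, c d * x j d * x k d := by
  simp only [sq, sum_mul_sum]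
  simp only [mul_sum]
  rw [sum_comm]
  refine sum_congr rfl fun j _ => ?_
  rw [sum_comm]
  simp only [mul_assoc]

theorem shapley_data_diag_general
    (N D : ℕ) (η : ℝ)
    (g : Fin N → Fin D → ℝ) (v : Fin D → ℝ) (c : Fin D → ℝ)
    (G : Fin D → ℝ) (hG : ∀ d, G d = ∑ n, g n d)
    (M : Fin N → Fin D → ℝ)
    (hM : ∀ n d, M n d = η * v d * g n d - η ^ 2 / 2 * c d * G d * g n d)
    (UD : Finset (Fin N) → ℝ)
    (hU : ∀ S, UD S = η * ∑ n ∈ S, ∑ d, v d * g n d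
        - η ^ 2 / 2 * ∑ d, c d * (∑ m ∈ S, g m d) ^ 2)
    (n : Fin N) :
    shapley UD n = ∑ d, M n d ∧
      shapley UD n = η * ∑ d, v d * g n d - η ^ 2 / 2 * ∑ d, c d * G d * g n d := by
  have hrow : ∑ d, c d * G d * g n d = ∑ k, ∑ d, c d * g n d * g k d := by
    simp only [hG, sum_mul, mul_sum]
    rw [sum_comm]
    simp only [mul_right_comm]
  have hUD : UD = fun S => ∑ j ∈ S, η * ∑ d, v d * g j d
      + ∑ j ∈ S, ∑ k ∈ S, -(η ^ 2 / 2) * ∑ d, c d * g j d * g k d := by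
    funext S
    rw [hU, sum_mul_sq_sum]
    simp only [← mul_sum]
    ring
  have hφ : shapley UD n = η * ∑ d, v d * g n d - η ^ 2 / 2 * ∑ d, c d * G d * g n d := by
    rw [hUD, shapley_quadratic_game _ _ (fun j k => by simp only [mul_right_comm]) n, hrow,
      ← mul_sum]
    ring
  refine ⟨hφ.trans ?_, hφ⟩
  simp only [hM, sum_sub_distrib, mul_sum, mul_assoc]

/-- **Shapley value of the data-side diagonal-curvature localized game.**
With `M^(diag)_{n,d} = η v_d g_{n,d} - (η²/2) c_d G_d g_{n,d}` and `G = ∑_n g_n`, the game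
`U_𝒟^(diag)(S) = η ∑_{n ∈ S} ⟨v, g_n⟩ - (η²/2) ∑_d c_d (∑_{m ∈ S} g_{m,d})²`
on players `{1,…,N}` has Shapley values
`φ_n = ∑_d M^(diag)_{n,d} = η ⟨v, g_n⟩ - (η²/2) ∑_d c_d G_d g_{n,d}`. -/
theorem shapley_data_diag
    (N D : ℕ) (hN : 1 ≤ N) (hD : 1 ≤ D) (η : ℝ) (hη : 0 < η)
    (g : Fin N → Fin D → ℝ) (v : Fin D → ℝ) (c : Fin D → ℝ)
    (G : Fin D → ℝ) (hG : ∀ d, G d = ∑ n, g n d)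
    (M : Fin N → Fin D → ℝ)
    (hM : ∀ n d, M n d = η * v d * g n d - η ^ 2 / 2 * c d * G d * g n d)
    (UD : Finset (Fin N) → ℝ)
    (hU : ∀ S, UD S = η * ∑ n ∈ S, ∑ d, v d * g n d
        - η ^ 2 / 2 * ∑ d, c d * (∑ m ∈ S, g m d) ^ 2)
    (n : Fin N) :
    shapley UD n = ∑ d, M n d ∧
      shapley UD n = η * ∑ d, v d * g n d - η ^ 2 / 2 * ∑ d, c d * G d * g n d :=
  shapley_data_diag_general N D η g v c G hG M hM UD hU n
end

section
/- Let H ∈ ℝ^{D×D} be a symmetric matrix and let the parameter-side full-Hessian localized game on {1,…,D} be U_θ^(full)(S) = η ∑_{d ∈ S} v_d G_d − (η²/2) ∑_{i ∈ S} ∑_{j ∈ S} G_i H_{ij} G_j. Then for every d ∈ {1,…,D}, the Shapley value of player d equals the column sum of the full interaction matrix: φ_d(U_θ^(full)) = ∑_{n=1}^N M^(full)_{n,d} = η v_d G_d − (η²/2) (H G)_d G_d. -/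
open Finset

lemma sum_w {α : Type*} [DecidableEq α] (m : ℕ) (A : Finset α) (hA : A.card + 1 = m) :
    ∑ S ∈ A.powerset,
      ((Nat.factorial S.card * Nat.factorial (m - S.card - 1) : ℝ) / (Nat.factorial m : ℝ)) = 1 := by
  rw [Finset.sum_powerset_apply_card
      (fun k => ((Nat.factorial k * Nat.factorial (m - k - 1) : ℝ) / (Nat.factorial m : ℝ)))]
  have hm : 0 < m := by omega
  have key : ∀ k ∈ range (A.card + 1),
      ((A.card).choose k) • ((Nat.factorial k * Nat.factorial (m - k - 1) : ℝ)
        / (Nat.factorial m : ℝ)) = ((Nat.factorial A.card : ℝ) / (Nat.factorial m : ℝ)) := by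
    intro k hk
    rw [mem_range, Nat.lt_succ_iff] at hk
    have h1 : m - k - 1 = A.card - k := by omega
    have h2 : (A.card).choose k * Nat.factorial k * Nat.factorial (A.card - k)
        = Nat.factorial A.card := Nat.choose_mul_factorial_mul_factorial hk
    rw [h1, nsmul_eq_mul]
    field_simp
    push_cast [← h2]
    ring
  rw [Finset.sum_congr rfl key, Finset.sum_const, Finset.card_range, nsmul_eq_mul]
  subst hA
  rw [Nat.factorial_succ]
  have : (Nat.factorial A.card : ℝ) ≠ 0 := by positivity
  push_cast
  field_simp

lemma sum_w_mem {α : Type*} [DecidableEq α] (m : ℕ) (A : Finset α) (hA : A.card + 1 = m)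
    (j : α) (hj : j ∈ A) :
    ∑ S ∈ A.powerset, (if j ∈ S then
      ((Nat.factorial S.card * Nat.factorial (m - S.card - 1) : ℝ) / (Nat.factorial m : ℝ))
      else 0) = 1 / 2 := by
  set B := A.erase j with hB
  have hjB : j ∉ B := Finset.notMem_erase _ _
  have hins : insert j B = A := Finset.insert_erase hj
  have hBcard : B.card + 2 = m := by
    have h1 : 1 ≤ A.card := Finset.card_pos.2 ⟨j, hj⟩
    rw [hB, Finset.card_erase_of_mem hj]; omega
  rw [← hins, Finset.sum_powerset_insert hjB]
  have h1 : ∑ S ∈ B.powerset, (if j ∈ S then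
      ((Nat.factorial S.card * Nat.factorial (m - S.card - 1) : ℝ) / (Nat.factorial m : ℝ))
      else 0) = 0 := by
    apply Finset.sum_eq_zero
    intro S hS
    rw [Finset.mem_powerset] at hS
    have : j ∉ S := fun h => hjB (hS h)
    simp [this]
  rw [h1, zero_add]
  have h2 : ∀ S ∈ B.powerset, (if j ∈ insert j S then
      ((Nat.factorial (insert j S).card * Nat.factorial (m - (insert j S).card - 1) : ℝ)
        / (Nat.factorial m : ℝ)) else 0)
      = ((Nat.factorial (S.card + 1) * Nat.factorial (m - S.card - 2) : ℝ)
        / (Nat.factorial m : ℝ)) := by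
    intro S hS
    rw [Finset.mem_powerset] at hS
    have hjS : j ∉ S := fun h => hjB (hS h)
    rw [if_pos (Finset.mem_insert_self _ _), Finset.card_insert_of_notMem hjS,
      show m - (S.card + 1) - 1 = m - S.card - 2 by omega]
  rw [Finset.sum_congr rfl h2]
  rw [Finset.sum_powerset_apply_card
      (fun k => ((Nat.factorial (k + 1) * Nat.factorial (m - k - 2) : ℝ) / (Nat.factorial m : ℝ)))]
  have key : ∀ k ∈ range (B.card + 1),
      ((B.card).choose k) • ((Nat.factorial (k + 1) * Nat.factorial (m - k - 2) : ℝ)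
        / (Nat.factorial m : ℝ))
      = ((k + 1 : ℝ)) * ((Nat.factorial B.card : ℝ) / (Nat.factorial m : ℝ)) := by
    intro k hk
    rw [mem_range, Nat.lt_succ_iff] at hk
    have h1 : m - k - 2 = B.card - k := by omega
    have h2 : (B.card).choose k * Nat.factorial k * Nat.factorial (B.card - k)
        = Nat.factorial B.card := Nat.choose_mul_factorial_mul_factorial hk
    rw [h1, nsmul_eq_mul, Nat.factorial_succ]
    field_simp
    push_cast [← h2]
    ring
  rw [Finset.sum_congr rfl key, ← Finset.sum_mul]
  have hsum : ∑ k ∈ range (B.card + 1), ((k : ℝ) + 1)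
      = (B.card + 1) * (B.card + 2) / 2 := by
    induction B.card with
    | zero => norm_num
    | succ n ih => rw [Finset.sum_range_succ, ih]; push_cast; ring
  rw [hsum]
  have hm : m = B.card + 2 := by omega
  subst hm
  rw [show B.card + 2 = (B.card + 1) + 1 from rfl, Nat.factorial_succ, Nat.factorial_succ]
  have : (Nat.factorial B.card : ℝ) ≠ 0 := by positivity
  push_cast
  field_simp
  ring


/-- **Shapley value of the parameter-side full-Hessian localized game.**
With `H` symmetric, `M^(full)_{n,d} = η v_d g_{n,d} - (η²/2) (H G)_d g_{n,d}` and
`G = ∑_n g_n`, the game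
`U_θ^(full)(S) = η ∑_{d ∈ S} v_d G_d - (η²/2) ∑_{i ∈ S} ∑_{j ∈ S} G_i H_{ij} G_j`
on players `{1,…,D}` has Shapley values
`φ_d = ∑_n M^(full)_{n,d} = η v_d G_d - (η²/2) (H G)_d G_d`. -/
theorem shapley_param_full
    (N D : ℕ) (hN : 1 ≤ N) (hD : 1 ≤ D) (η : ℝ) (hη : 0 < η)
    (g : Fin N → Fin D → ℝ) (v : Fin D → ℝ)
    (H : Matrix (Fin D) (Fin D) ℝ) (hH : ∀ i j, H i j = H j i)
    (G : Fin D → ℝ) (hG : ∀ d, G d = ∑ n, g n d)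
    (M : Fin N → Fin D → ℝ)
    (hM : ∀ n d, M n d = η * v d * g n d - η ^ 2 / 2 * (∑ j, H d j * G j) * g n d)
    (Uθ : Finset (Fin D) → ℝ)
    (hU : ∀ S, Uθ S = η * ∑ d ∈ S, v d * G d
        - η ^ 2 / 2 * ∑ i ∈ S, ∑ j ∈ S, G i * H i j * G j)
    (d : Fin D) :
    shapley Uθ d = ∑ n, M n d ∧
      shapley Uθ d = η * v d * G d - η ^ 2 / 2 * (∑ j, H d j * G j) * G d := by
  classical
  set m := Fintype.card (Fin D) with hm
  set A : Finset (Fin D) := Finset.univ.erase d with hAdef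
  set w : Finset (Fin D) → ℝ := fun S =>
    ((Nat.factorial S.card * Nat.factorial (m - S.card - 1) : ℝ) / (Nat.factorial m : ℝ))
    with hw
  have hAcard : A.card + 1 = m := by
    rw [hAdef, Finset.card_erase_of_mem (Finset.mem_univ d), Finset.card_univ, hm]
    have : 1 ≤ Fintype.card (Fin D) := by simpa using hD
    omega
  set c : ℝ := η * (v d * G d) - η ^ 2 / 2 * (G d * H d d * G d) with hc
  set b : Fin D → ℝ := fun j => -(η ^ 2) * (G d * H d j * G j) with hb
  have hmarg : ∀ S ∈ A.powerset, Uθ (insert d S) - Uθ S = c + ∑ j ∈ S, b j := by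
    intro S hS
    rw [Finset.mem_powerset] at hS
    have hdS : d ∉ S := fun h => (Finset.notMem_erase d _) (hS h)
    have hin : ∀ i ∈ S, ∑ j ∈ insert d S, G i * H i j * G j
        = G i * H i d * G d + ∑ j ∈ S, G i * H i j * G j :=
      fun i _ => Finset.sum_insert hdS
    rw [hU, hU, Finset.sum_insert hdS, Finset.sum_insert hdS,
      Finset.sum_congr rfl hin, Finset.sum_insert hdS, Finset.sum_add_distrib]
    have hsymm : ∑ i ∈ S, G i * H i d * G d = ∑ j ∈ S, G d * H d j * G j := by
      refine Finset.sum_congr rfl fun i _ => ?_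
      rw [hH i d]; ring
    have hbS : ∑ j ∈ S, b j = -(η ^ 2) * ∑ j ∈ S, G d * H d j * G j := by
      rw [Finset.mul_sum]
    rw [hsymm, hbS, hc]
    ring
  have hshap : shapley Uθ d = ∑ S ∈ A.powerset, w S * (c + ∑ j ∈ S, b j) := by
    unfold shapley
    exact Finset.sum_congr rfl fun S hS => by rw [hmarg S hS]
  have hsplit : shapley Uθ d = c * (∑ S ∈ A.powerset, w S)
      + ∑ j ∈ A, b j * (∑ S ∈ A.powerset, if j ∈ S then w S else 0) := by
    rw [hshap]
    have h1 : ∀ S ∈ A.powerset, w S * (c + ∑ j ∈ S, b j)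
        = c * w S + ∑ j ∈ A, (if j ∈ S then b j * w S else 0) := by
      intro S hS
      rw [Finset.mem_powerset] at hS
      have h2 : ∑ j ∈ A, (if j ∈ S then b j * w S else 0) = ∑ j ∈ S, b j * w S := by
        rw [Finset.sum_ite_mem, Finset.inter_eq_right.2 hS]
      rw [h2, ← Finset.sum_mul]
      ring
    rw [Finset.sum_congr rfl h1, Finset.sum_add_distrib, ← Finset.mul_sum, Finset.sum_comm]
    congr 1
    refine Finset.sum_congr rfl fun j _ => ?_
    rw [Finset.mul_sum]
    refine Finset.sum_congr rfl fun S _ => ?_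
    split <;> simp
  have hW1 : ∑ S ∈ A.powerset, w S = 1 := sum_w m A hAcard
  have hW2 : ∀ j ∈ A, (∑ S ∈ A.powerset, if j ∈ S then w S else 0) = 1 / 2 :=
    fun j hj => sum_w_mem m A hAcard j hj
  have hval : shapley Uθ d = η * v d * G d - η ^ 2 / 2 * (∑ j, H d j * G j) * G d := by
    rw [hsplit, hW1, Finset.sum_congr rfl (fun j hj => by rw [hW2 j hj])]
    have hAsum : ∑ j ∈ A, b j * (1 / 2) = ((∑ j, b j) - b d) * (1 / 2) := by
      rw [← Finset.sum_mul, hAdef, Finset.sum_erase_eq_sub (Finset.mem_univ d)]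
    rw [hAsum]
    have hbsum : ∑ j, b j = -(η ^ 2) * (G d * ∑ j, H d j * G j) := by
      rw [Finset.mul_sum, Finset.mul_sum]
      exact Finset.sum_congr rfl fun j _ => by ring
    rw [hbsum, hc, hb]
    ring
  refine ⟨?_, hval⟩
  rw [hval]
  have : ∑ n, M n d = (η * v d - η ^ 2 / 2 * (∑ j, H d j * G j)) * ∑ n, g n d := by
    rw [Finset.mul_sum]
    exact Finset.sum_congr rfl fun n _ => by rw [hM]; ring
  rw [this, ← hG]
  ring
end

section
/- Let H ∈ ℝ^{D×D} be a symmetric matrix and let the data-side full-Hessian localized game on {1,…,N} be U_𝒟^(full)(S) = η ∑_{n ∈ S} ⟨v, g_n⟩ − (η²/2) (∑_{m ∈ S} g_m)ᵀ H (∑_{m ∈ S} g_m). Then for every n ∈ {1,…,N}, the Shapley value of player n equals the row sum of the full interaction matrix: φ_n(U_𝒟^(full)) = ∑_{d=1}^D M^(full)_{n,d} = η ⟨v, g_n⟩ − (η²/2) g_nᵀ H G. -/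
open Finset

noncomputable def shapW (N : ℕ) (S : Finset (Fin N)) : ℝ :=
  (Nat.factorial S.card * Nat.factorial (N - S.card - 1) : ℝ) / (Nat.factorial N : ℝ)

lemma weight_sum (N : ℕ) (hN : 1 ≤ N) (T : Finset (Fin N)) (hT : T.card = N - 1) :
    ∑ S ∈ T.powerset, shapW N S = 1 := by
  unfold shapW
  rw [Finset.sum_powerset_apply_card
    (f := fun k => ((Nat.factorial k * Nat.factorial (N - k - 1) : ℝ) / (Nat.factorial N : ℝ))), hT]
  have hstep : ∀ k ∈ range (N - 1 + 1),
      (N - 1).choose k • ((Nat.factorial k * Nat.factorial (N - k - 1) : ℝ) / (Nat.factorial N : ℝ))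
        = (1 : ℝ) / N := by
    intro k hk
    have hk' : k ≤ N - 1 := Nat.lt_succ_iff.mp (mem_range.mp hk)
    have key : (N - 1).choose k * Nat.factorial k * Nat.factorial (N - 1 - k)
        = Nat.factorial (N - 1) := Nat.choose_mul_factorial_mul_factorial hk'
    have h2 : N - k - 1 = N - 1 - k := by omega
    have hNfac : Nat.factorial N = N * Nat.factorial (N - 1) := by
      conv_lhs => rw [show N = (N - 1) + 1 by omega, Nat.factorial_succ, show (N - 1) + 1 = N by omega]
    rw [nsmul_eq_mul, h2]
    have hc : ((N - 1).choose k : ℝ) * ((Nat.factorial k * Nat.factorial (N - 1 - k) : ℝ)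
          / (Nat.factorial N : ℝ))
        = ((Nat.factorial (N - 1) : ℝ)) / (Nat.factorial N : ℝ) := by
      rw [← key]; push_cast; ring
    rw [hc, hNfac]
    have hf : (Nat.factorial (N - 1) : ℝ) ≠ 0 := Nat.cast_ne_zero.mpr (Nat.factorial_ne_zero _)
    have hNne : (N : ℝ) ≠ 0 := Nat.cast_ne_zero.mpr (by omega)
    push_cast
    field_simp
  rw [Finset.sum_congr rfl hstep, sum_const, card_range, nsmul_eq_mul]
  have : ((N - 1 + 1 : ℕ) : ℝ) = N := by push_cast [Nat.sub_add_cancel hN]; rfl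
  rw [this]
  field_simp

lemma weight_sum_mem (N : ℕ) (hN : 1 ≤ N) (T : Finset (Fin N)) (hT : T.card = N - 1)
    {m : Fin N} (hm : m ∈ T) :
    ∑ S ∈ T.powerset, (if m ∈ S then shapW N S else 0) = 1 / 2 := by
  unfold shapW
  set w : Finset (Fin N) → ℝ := fun S =>
    ((Nat.factorial S.card * Nat.factorial (N - S.card - 1) : ℝ) / (Nat.factorial N : ℝ)) with hw
  have hwinv : ∀ S ∈ T.powerset, w (T \ S) = w S := by
    intro S hS
    have hsub : S ⊆ T := mem_powerset.mp hS
    have hcard : (T \ S).card = N - 1 - S.card := by rw [card_sdiff_of_subset hsub, hT]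
    have hle : S.card ≤ N - 1 := hT ▸ card_le_card hsub
    simp only [hw, hcard]
    rw [show N - (N - 1 - S.card) - 1 = S.card by omega, show N - S.card - 1 = N - 1 - S.card by omega]
    ring
  have hswap : ∑ S ∈ T.powerset, (if m ∈ S then w S else 0)
      = ∑ S ∈ T.powerset, (if m ∉ S then w S else 0) := by
    apply Finset.sum_nbij' (i := fun S => T \ S) (j := fun S => T \ S)
    · intro S hS; exact mem_powerset.mpr (sdiff_subset)
    · intro S hS; exact mem_powerset.mpr (sdiff_subset)
    · intro S hS; exact Finset.sdiff_sdiff_eq_self (mem_powerset.mp hS)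
    · intro S hS; exact Finset.sdiff_sdiff_eq_self (mem_powerset.mp hS)
    · intro S hS
      have : m ∈ T \ S ↔ m ∉ S := by simp [Finset.mem_sdiff, hm]
      rw [hwinv S hS]
      by_cases h : m ∈ S <;> simp [h, this]
  have hsum : ∑ S ∈ T.powerset, w S = 1 := weight_sum N hN T hT
  have h2 : (∑ S ∈ T.powerset, (if m ∈ S then w S else 0))
      + (∑ S ∈ T.powerset, (if m ∈ S then w S else 0)) = 1 := by
    nth_rewrite 2 [hswap]
    rw [← Finset.sum_add_distrib, ← hsum]
    apply Finset.sum_congr rfl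
    intro S hS
    by_cases h : m ∈ S <;> simp [h]
  linarith

/-- **Shapley value of the data-side full-Hessian localized game.**
With `H` symmetric, `M^(full)_{n,d} = η v_d g_{n,d} - (η²/2) (H G)_d g_{n,d}` and
`G = ∑_n g_n`, the game
`U_𝒟^(full)(S) = η ∑_{n ∈ S} ⟨v, g_n⟩ - (η²/2) (∑_{m ∈ S} g_m)ᵀ H (∑_{m ∈ S} g_m)`
on players `{1,…,N}` has Shapley values
`φ_n = ∑_d M^(full)_{n,d} = η ⟨v, g_n⟩ - (η²/2) g_nᵀ H G`. -/
theorem shapley_data_full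
    (N D : ℕ) (hN : 1 ≤ N) (hD : 1 ≤ D) (η : ℝ) (hη : 0 < η)
    (g : Fin N → Fin D → ℝ) (v : Fin D → ℝ)
    (H : Matrix (Fin D) (Fin D) ℝ) (hH : ∀ i j, H i j = H j i)
    (G : Fin D → ℝ) (hG : ∀ d, G d = ∑ n, g n d)
    (M : Fin N → Fin D → ℝ)
    (hM : ∀ n d, M n d = η * v d * g n d - η ^ 2 / 2 * (∑ j, H d j * G j) * g n d)
    (UD : Finset (Fin N) → ℝ)
    (hU : ∀ S, UD S = η * ∑ n ∈ S, ∑ d, v d * g n d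
        - η ^ 2 / 2 * ∑ i, ∑ j, (∑ m ∈ S, g m i) * H i j * (∑ m ∈ S, g m j))
    (n : Fin N) :
    shapley UD n = ∑ d, M n d ∧
      shapley UD n = η * ∑ d, v d * g n d
        - η ^ 2 / 2 * ∑ i, ∑ j, g n i * H i j * G j := by
  classical
  set T := (Finset.univ.erase n) with hTdef
  have hTcard : T.card = N - 1 := by
    rw [hTdef, card_erase_of_mem (mem_univ n), card_univ, Fintype.card_fin]
  set b : Fin N → ℝ := fun m => ∑ i, ∑ j, g n i * H i j * g m j with hb
  have hbs : ∀ S : Finset (Fin N),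
      ∑ i, ∑ j, g n i * H i j * (∑ m ∈ S, g m j) = ∑ m ∈ S, b m := by
    intro S
    simp_rw [Finset.mul_sum]
    have h1 : ∀ i : Fin D, ∑ j, ∑ m ∈ S, g n i * H i j * g m j
        = ∑ m ∈ S, ∑ j, g n i * H i j * g m j := fun i => Finset.sum_comm
    simp_rw [h1]
    exact Finset.sum_comm
  set A : ℝ := η * ∑ d, v d * g n d - η ^ 2 / 2 * b n with hA
  have hmarg : ∀ S ∈ T.powerset, UD (insert n S) - UD S = A - η ^ 2 * ∑ m ∈ S, b m := by
    intro S hS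
    have hsub : S ⊆ T := mem_powerset.mp hS
    have hnS : n ∉ S := fun h => (Finset.mem_erase.mp (hsub h)).1 rfl
    rw [hU, hU, Finset.sum_insert hnS]
    have hins : ∀ j : Fin D, (∑ m ∈ insert n S, g m j) = g n j + ∑ m ∈ S, g m j :=
      fun j => Finset.sum_insert hnS
    simp_rw [hins]
    have expand : ∑ i, ∑ j, (g n i + ∑ m ∈ S, g m i) * H i j * (g n j + ∑ m ∈ S, g m j)
        = (∑ i, ∑ j, g n i * H i j * g n j)
          + (∑ i, ∑ j, g n i * H i j * (∑ m ∈ S, g m j))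
          + (∑ i, ∑ j, (∑ m ∈ S, g m i) * H i j * g n j)
          + (∑ i, ∑ j, (∑ m ∈ S, g m i) * H i j * (∑ m ∈ S, g m j)) := by
      simp_rw [← Finset.sum_add_distrib]
      refine Finset.sum_congr rfl fun i _ => Finset.sum_congr rfl fun j _ => by ring
    have hsymterm : ∑ i, ∑ j, (∑ m ∈ S, g m i) * H i j * g n j
        = ∑ i, ∑ j, g n i * H i j * (∑ m ∈ S, g m j) := by
      rw [Finset.sum_comm]
      refine Finset.sum_congr rfl fun i _ => Finset.sum_congr rfl fun j _ => by rw [hH j i]; ring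
    have hbn : (∑ i, ∑ j, g n i * H i j * g n j) = b n := rfl
    rw [expand, hsymterm, hbs S, hbn, hA]
    ring
  have hw1 : ∑ S ∈ T.powerset, shapW N S = 1 := weight_sum N hN T hTcard
  have hsplit : ∀ S ∈ T.powerset, ∑ m ∈ S, b m = ∑ m ∈ T, (if m ∈ S then b m else 0) := by
    intro S hS
    rw [Finset.sum_ite_mem, Finset.inter_eq_right.mpr (mem_powerset.mp hS)]
  have key : shapley UD n = A - η ^ 2 / 2 * ∑ m ∈ T, b m := by
    have hunf : shapley UD n = ∑ S ∈ T.powerset, shapW N S * (UD (insert n S) - UD S) := by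
      rw [shapley]
      simp only [Fintype.card_fin]
      rfl
    rw [hunf]
    have step1 : ∑ S ∈ T.powerset, shapW N S * (UD (insert n S) - UD S)
        = ∑ S ∈ T.powerset,
            (shapW N S * A - η ^ 2 * ∑ m ∈ T, (if m ∈ S then shapW N S * b m else 0)) := by
      refine Finset.sum_congr rfl fun S hS => ?_
      rw [hmarg S hS, hsplit S hS, mul_sub]
      congr 1
      simp only [Finset.mul_sum, mul_ite, mul_zero]
      refine Finset.sum_congr rfl fun m _ => ?_
      split <;> ring
    rw [step1, Finset.sum_sub_distrib, ← Finset.sum_mul, hw1, one_mul]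
    congr 1
    rw [← Finset.mul_sum, Finset.sum_comm]
    have hin : ∀ m ∈ T, ∑ S ∈ T.powerset, (if m ∈ S then shapW N S * b m else 0)
        = 1 / 2 * b m := by
      intro m hm
      have h := weight_sum_mem N hN T hTcard hm
      calc ∑ S ∈ T.powerset, (if m ∈ S then shapW N S * b m else 0)
          = (∑ S ∈ T.powerset, (if m ∈ S then shapW N S else 0)) * b m := by
            rw [Finset.sum_mul]
            refine Finset.sum_congr rfl fun S _ => by split <;> ring
        _ = 1 / 2 * b m := by rw [h]
    rw [Finset.sum_congr rfl hin, ← Finset.mul_sum]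
    ring
  have hTb : ∑ m, b m = b n + ∑ m ∈ T, b m := (Finset.add_sum_erase _ b (mem_univ n)).symm
  have hGb : ∑ i, ∑ j, g n i * H i j * G j = ∑ m, b m := by
    simp_rw [hG]
    exact hbs univ
  constructor
  · rw [key]
    have hM' : ∑ d, M n d
        = η * ∑ d, v d * g n d - η ^ 2 / 2 * ∑ i, ∑ j, g n i * H i j * G j := by
      have hd : ∀ d : Fin D, (η ^ 2 / 2 * ∑ j, H d j * G j) * g n d
          = η ^ 2 / 2 * ∑ j, g n d * H d j * G j := by
        intro d
        calc (η ^ 2 / 2 * ∑ j, H d j * G j) * g n d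
            = η ^ 2 / 2 * ((∑ j, H d j * G j) * g n d) := by ring
          _ = η ^ 2 / 2 * ∑ j, H d j * G j * g n d := by rw [Finset.sum_mul]
          _ = η ^ 2 / 2 * ∑ j, g n d * H d j * G j := by
              exact congrArg _ (Finset.sum_congr rfl fun j _ => by ring)
      have h1 : ∀ x : Fin D, η * v x * g n x = η * (v x * g n x) := fun x => by ring
      simp_rw [hM, hd, h1]
      rw [Finset.sum_sub_distrib, ← Finset.mul_sum, ← Finset.mul_sum]
    rw [hM', hGb, hTb, hA]
    ring
  · rw [key, hGb, hTb, hA]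
    ring
end
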